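/- arXiv:1604.03930 — 4 statements merged into one kernel-verified Lean document; each statement's English description precedes it below -/
import Mathlib

section
/- Let A be a d×d real symmetric matrix, B a d×d real symmetric positive definite matrix, and v₁, …, v_d a B-orthonormal basis with A vᵢ = λᵢ B vᵢ and |λ₁| ≥ |λ₂| ≥ … ≥ |λ_d|, where |λ₁| > |λ₂|. Let w ∈ ℝ^d satisfy ⟨w, v₁⟩_B ≠ 0 and set w' = B^{-1} A w. Then w' ≠ 0, ⟨w', v₁⟩_B ≠ 0, and the tangent of the angle to v₁ contracts by a factor |λ₂|/|λ₁|: √(Σ_{i≥2} ⟨w', vᵢ⟩_B²) / |⟨w', v₁⟩_B| ≤ (|λ₂|/|λ₁|) · √(Σ_{i≥2} ⟨w, vᵢ⟩_B²) / |⟨w, v₁⟩_B|. -/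
open Matrix

/-! Since `A` and `B` are symmetric, `⟨B⁻¹ A w, vᵢ⟩_B = wᵀ A vᵢ = λᵢ ⟨w, vᵢ⟩_B`: one step of the
iteration multiplies the `i`-th `B`-coordinate by `λᵢ`. The coordinate along `v₁` is thus scaled by
`|λ₁|`, while the remaining ones are scaled by at most `|λ₂|`. -/

namespace Matrix

variable {n R : Type*} [Fintype n] [DecidableEq n] [CommRing R]

theorem inv_mul_mulVec_dotProduct_mulVec_of_mulVec_eq_smul {A B : Matrix n n R}
    (hA : A.IsSymm) (hB : B.IsSymm) (hBdet : IsUnit B.det) {μ : R} {v : n → R}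
    (hv : A *ᵥ v = μ • B *ᵥ v) (w : n → R) :
    (B⁻¹ * A) *ᵥ w ⬝ᵥ B *ᵥ v = μ * (w ⬝ᵥ B *ᵥ v) := calc
  (B⁻¹ * A) *ᵥ w ⬝ᵥ B *ᵥ v = w ⬝ᵥ (A * B⁻¹) *ᵥ B *ᵥ v := by
    rw [dotProduct_comm, ← dotProduct_transpose_mulVec (B⁻¹ * A) w, transpose_mul, hA.eq, hB.inv.eq]
  _ = w ⬝ᵥ A *ᵥ v := by rw [mulVec_mulVec, Matrix.mul_assoc, nonsing_inv_mul B hBdet, Matrix.mul_one]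
  _ = μ * (w ⬝ᵥ B *ᵥ v) := by rw [hv, dotProduct_smul, smul_eq_mul]

end Matrix

theorem Real.sqrt_sum_mul_sq_le {ι : Type*} (s : Finset ι) (c x : ι → ℝ) {r : ℝ}
    (hc : ∀ i ∈ s, |c i| ≤ |r|) :
    √(∑ i ∈ s, (c i * x i) ^ 2) ≤ |r| * √(∑ i ∈ s, x i ^ 2) := by
  have hsum : ∑ i ∈ s, (c i * x i) ^ 2 ≤ r ^ 2 * ∑ i ∈ s, x i ^ 2 := by
    rw [Finset.mul_sum]
    refine Finset.sum_le_sum fun i hi => ?_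
    rw [mul_pow]
    exact mul_le_mul_of_nonneg_right (sq_le_sq.mpr (hc i hi)) (sq_nonneg _)
  calc √(∑ i ∈ s, (c i * x i) ^ 2) ≤ √(r ^ 2 * ∑ i ∈ s, x i ^ 2) := Real.sqrt_le_sqrt hsum
    _ = |r| * √(∑ i ∈ s, x i ^ 2) := by rw [Real.sqrt_mul (sq_nonneg _), Real.sqrt_sq_eq_abs]

theorem power_iteration_tangent_contraction_general (d : ℕ) (h2 : 2 ≤ d)
    (A B : Matrix (Fin d) (Fin d) ℝ) (hA : A.IsSymm) (hB : B.PosDef)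
    (lam : Fin d → ℝ) (v : Fin d → (Fin d → ℝ))
    (heig : ∀ i, A.mulVec (v i) = lam i • B.mulVec (v i))
    (hsort : ∀ i j : Fin d, i ≤ j → |lam j| ≤ |lam i|)
    (hgap : |lam ⟨1, h2⟩| < |lam ⟨0, Nat.lt_of_lt_of_le Nat.zero_lt_two h2⟩|)
    (w : Fin d → ℝ)
    (hw : w ⬝ᵥ B.mulVec (v ⟨0, Nat.lt_of_lt_of_le Nat.zero_lt_two h2⟩) ≠ 0) :
    (B⁻¹ * A).mulVec w ≠ 0 ∧
    (B⁻¹ * A).mulVec w ⬝ᵥ B.mulVec (v ⟨0, Nat.lt_of_lt_of_le Nat.zero_lt_two h2⟩) ≠ 0 ∧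
    Real.sqrt (∑ i ∈ Finset.univ.erase ⟨0, Nat.lt_of_lt_of_le Nat.zero_lt_two h2⟩,
        ((B⁻¹ * A).mulVec w ⬝ᵥ B.mulVec (v i)) ^ 2) /
      |(B⁻¹ * A).mulVec w ⬝ᵥ B.mulVec (v ⟨0, Nat.lt_of_lt_of_le Nat.zero_lt_two h2⟩)| ≤
    (|lam ⟨1, h2⟩| / |lam ⟨0, Nat.lt_of_lt_of_le Nat.zero_lt_two h2⟩|) *
      (Real.sqrt (∑ i ∈ Finset.univ.erase ⟨0, Nat.lt_of_lt_of_le Nat.zero_lt_two h2⟩,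
          (w ⬝ᵥ B.mulVec (v i)) ^ 2) /
        |w ⬝ᵥ B.mulVec (v ⟨0, Nat.lt_of_lt_of_le Nat.zero_lt_two h2⟩)|) := by
  set i₀ : Fin d := ⟨0, Nat.lt_of_lt_of_le Nat.zero_lt_two h2⟩
  set i₁ : Fin d := ⟨1, h2⟩
  have hcoord (i : Fin d) : (B⁻¹ * A) *ᵥ w ⬝ᵥ B *ᵥ v i = lam i * (w ⬝ᵥ B *ᵥ v i) :=
    inv_mul_mulVec_dotProduct_mulVec_of_mulVec_eq_smul hA
      (isHermitian_iff_isSymm.mp hB.isHermitian) hB.det_pos.ne'.isUnit (heig i) w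
  have hlam₀ : lam i₀ ≠ 0 := abs_pos.mp ((abs_nonneg _).trans_lt hgap)
  have hcoord₀ : (B⁻¹ * A) *ᵥ w ⬝ᵥ B *ᵥ v i₀ ≠ 0 := by
    rw [hcoord]; exact mul_ne_zero hlam₀ hw
  refine ⟨fun h => hcoord₀ (by rw [h, zero_dotProduct]), hcoord₀, ?_⟩
  have htail : ∀ i ∈ Finset.univ.erase i₀, |lam i| ≤ |lam i₁| := fun i hi =>
    hsort i₁ i (Fin.mk_le_of_le_val (Nat.one_le_iff_ne_zero.mpr
      fun h => Finset.ne_of_mem_erase hi (Fin.ext h)))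
  simp only [hcoord]
  calc _ = √(∑ i ∈ Finset.univ.erase i₀, (lam i * (w ⬝ᵥ B *ᵥ v i)) ^ 2) /
        (|lam i₀| * |w ⬝ᵥ B *ᵥ v i₀|) := by rw [abs_mul]
    _ ≤ |lam i₁| * √(∑ i ∈ Finset.univ.erase i₀, (w ⬝ᵥ B *ᵥ v i) ^ 2) /
        (|lam i₀| * |w ⬝ᵥ B *ᵥ v i₀|) :=
      div_le_div_of_nonneg_right (Real.sqrt_sum_mul_sq_le _ _ _ htail) (by positivity)
    _ = _ := (div_mul_div_comm _ _ _ _).symm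

/-- One step of the power iteration `w' = B⁻¹ A w` contracts the tangent of
the `B`-angle to the top generalized eigenvector `v₁` by a factor `|λ₂|/|λ₁|`. -/
theorem power_iteration_tangent_contraction (d : ℕ) (h2 : 2 ≤ d)
    (A B : Matrix (Fin d) (Fin d) ℝ) (hA : A.IsSymm) (hB : B.PosDef)
    (lam : Fin d → ℝ) (v : Fin d → (Fin d → ℝ))
    (heig : ∀ i, A.mulVec (v i) = lam i • B.mulVec (v i))
    (horth : ∀ i j, v i ⬝ᵥ B.mulVec (v j) = if i = j then 1 else 0)
    (hbasis : Submodule.span ℝ (Set.range v) = ⊤)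
    (hsort : ∀ i j : Fin d, i ≤ j → |lam j| ≤ |lam i|)
    (hgap : |lam ⟨1, h2⟩| < |lam ⟨0, Nat.lt_of_lt_of_le Nat.zero_lt_two h2⟩|)
    (w : Fin d → ℝ)
    (hw : w ⬝ᵥ B.mulVec (v ⟨0, Nat.lt_of_lt_of_le Nat.zero_lt_two h2⟩) ≠ 0) :
    (B⁻¹ * A).mulVec w ≠ 0 ∧
    (B⁻¹ * A).mulVec w ⬝ᵥ B.mulVec (v ⟨0, Nat.lt_of_lt_of_le Nat.zero_lt_two h2⟩) ≠ 0 ∧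
    Real.sqrt (∑ i ∈ Finset.univ.erase ⟨0, Nat.lt_of_lt_of_le Nat.zero_lt_two h2⟩,
        ((B⁻¹ * A).mulVec w ⬝ᵥ B.mulVec (v i)) ^ 2) /
      |(B⁻¹ * A).mulVec w ⬝ᵥ B.mulVec (v ⟨0, Nat.lt_of_lt_of_le Nat.zero_lt_two h2⟩)| ≤
    (|lam ⟨1, h2⟩| / |lam ⟨0, Nat.lt_of_lt_of_le Nat.zero_lt_two h2⟩|) *
      (Real.sqrt (∑ i ∈ Finset.univ.erase ⟨0, Nat.lt_of_lt_of_le Nat.zero_lt_two h2⟩,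
          (w ⬝ᵥ B.mulVec (v i)) ^ 2) /
        |w ⬝ᵥ B.mulVec (v ⟨0, Nat.lt_of_lt_of_le Nat.zero_lt_two h2⟩)|) :=
  power_iteration_tangent_contraction_general d h2 A B hA hB lam v heig hsort hgap w hw
end

section
/- Let A be a d×d real symmetric matrix, B a d×d real symmetric positive definite matrix, and v₁, …, v_d a B-orthonormal basis with A vᵢ = λᵢ B vᵢ and |λ₁| ≥ |λ₂| ≥ … ≥ |λ_d|, where |λ₁| > |λ₂|. Set ρ = 1 − |λ₂|/|λ₁| and define the power iteration w_{t+1} = B^{-1} A w_t from an initial w₀ with cos θ_B(w₀, v₁) > 0. Then for every ε ∈ (0,1) and every natural number T ≥ (2/ρ) · log(1/(ε · cos θ_B(w₀, v₁))), one has sin θ_B(w_T, v₁) ≤ ε. -/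
open Matrix

/-- The cosine of the angle between `u` and `v` in the `B`-geometry:
`cos θ_B(u, v) = |⟨u, v⟩_B| / ‖u‖_B` (for `v` of unit `B`-norm). -/
noncomputable def cosAngleB {d : ℕ} (B : Matrix (Fin d) (Fin d) ℝ) (u v : Fin d → ℝ) : ℝ :=
  |u ⬝ᵥ B.mulVec v| / Real.sqrt (u ⬝ᵥ B.mulVec u)

/-- The sine of the angle between `u` and `v` in the `B`-geometry. -/
noncomputable def sinAngleB {d : ℕ} (B : Matrix (Fin d) (Fin d) ℝ) (u v : Fin d → ℝ) : ℝ :=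
  Real.sqrt (1 - cosAngleB B u v ^ 2)

/-! In the `B`-orthonormal eigenbasis, `w₀ = ∑ cᵢ vᵢ` and `w_T = ∑ λᵢ^T cᵢ vᵢ`, so `B`-angles are
computed from coefficient vectors as in Euclidean space. Bounding every `|λᵢ|`, `i ≥ 2`, by `|λ₂|`
gives `sin θ_B(w_T, v₁) ≤ r^T / cos θ_B(w₀, v₁)` with `r = |λ₂|/|λ₁| = 1 - ρ`, and `r ≤ e^{-ρ}` turns
the bound on `T` into `r^T ≤ ε cos θ_B(w₀, v₁)`. -/

open Finset

section Orthonormal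

variable {n ι R : Type*} [Fintype n] [Fintype ι] [DecidableEq ι] [CommSemiring R]
  {B : Matrix n n R} {v : ι → n → R}

theorem sum_smul_dotProduct_mulVec_of_orthonormal
    (horth : ∀ i j, v i ⬝ᵥ B *ᵥ v j = if i = j then 1 else 0) (a : ι → R) (k : ι) :
    (∑ i, a i • v i) ⬝ᵥ B *ᵥ v k = a k := by
  simp [sum_dotProduct, smul_dotProduct, horth]

theorem sum_smul_dotProduct_mulVec_self_of_orthonormal
    (horth : ∀ i j, v i ⬝ᵥ B *ᵥ v j = if i = j then 1 else 0) (a : ι → R) :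
    (∑ i, a i • v i) ⬝ᵥ B *ᵥ (∑ i, a i • v i) = ∑ i, a i ^ 2 := by
  simp only [mulVec_sum, mulVec_smul, dotProduct_sum, dotProduct_smul,
    sum_smul_dotProduct_mulVec_of_orthonormal horth, smul_eq_mul, sq]

end Orthonormal

theorem Matrix.inv_mul_mulVec_eq_smul {n R : Type*} [Fintype n] [DecidableEq n] [CommRing R]
    {A B : Matrix n n R} (hB : IsUnit B.det) {x : n → R} {μ : R} (h : A *ᵥ x = μ • B *ᵥ x) :
    (B⁻¹ * A) *ᵥ x = μ • x := by
  rw [← mulVec_mulVec, h, mulVec_smul, mulVec_mulVec, nonsing_inv_mul B hB, one_mulVec]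

theorem iterate_eq_sum_pow_smul {n ι R : Type*} [Fintype n] [Fintype ι] [CommSemiring R]
    {M : Matrix n n R} {v : ι → n → R} {lam : ι → R} (heig : ∀ i, M *ᵥ v i = lam i • v i)
    {w : ℕ → n → R} (hw : ∀ t, w (t + 1) = M *ᵥ w t) {c : ι → R} (h0 : w 0 = ∑ i, c i • v i) :
    ∀ t, w t = ∑ i, (lam i ^ t * c i) • v i
  | 0 => by simp [h0]
  | t + 1 => by
    simp only [hw t, iterate_eq_sum_pow_smul heig hw h0 t, mulVec_sum, mulVec_smul, heig,
      smul_smul, pow_succ]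
    simp only [mul_comm, mul_left_comm]

theorem pow_le_of_log_inv_le_mul {r x : ℝ} (hr : 0 ≤ r) (hx : 0 < x) {T : ℕ}
    (h : Real.log (1 / x) ≤ (1 - r) * T) : r ^ T ≤ x :=
  calc r ^ T ≤ Real.exp (-(1 - r)) ^ T := by
        gcongr; simpa using Real.one_sub_le_exp_neg (1 - r)
    _ = Real.exp (-((1 - r) * T)) := by rw [← Real.exp_nat_mul]; ring_nf
    _ ≤ Real.exp (-Real.log (1 / x)) := by gcongr
    _ = x := by rw [one_div, Real.log_inv, neg_neg, Real.exp_log hx]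

section Angle

variable {d : ℕ} {ι : Type*} [Fintype ι] [DecidableEq ι] {B : Matrix (Fin d) (Fin d) ℝ}
  {v : ι → Fin d → ℝ} (horth : ∀ i j, v i ⬝ᵥ B *ᵥ v j = if i = j then 1 else 0)
include horth

theorem cosAngleB_sum_smul_of_orthonormal (a : ι → ℝ) (k : ι) :
    cosAngleB B (∑ i, a i • v i) (v k) = |a k| / √(∑ i, a i ^ 2) := by
  rw [cosAngleB, sum_smul_dotProduct_mulVec_of_orthonormal horth,
    sum_smul_dotProduct_mulVec_self_of_orthonormal horth]

theorem cosAngleB_sum_smul_le_one_of_orthonormal (a : ι → ℝ) (k : ι) :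
    cosAngleB B (∑ i, a i • v i) (v k) ≤ 1 := by
  rw [cosAngleB_sum_smul_of_orthonormal horth]
  exact div_le_one_of_le₀ (Real.abs_le_sqrt (single_le_sum (fun i _ => sq_nonneg (a i))
    (mem_univ k))) (Real.sqrt_nonneg _)

theorem sinAngleB_sum_smul_le_of_orthonormal (a : ι → ℝ) {k : ι} (hk : a k ≠ 0) :
    sinAngleB B (∑ i, a i • v i) (v k) ≤ √(∑ i ∈ univ.erase k, a i ^ 2) / |a k| := by
  have hak : 0 < a k ^ 2 := by positivity
  have htail : 0 ≤ ∑ i ∈ univ.erase k, a i ^ 2 := sum_nonneg fun i _ => sq_nonneg (a i)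
  rw [sinAngleB, cosAngleB_sum_smul_of_orthonormal horth, div_pow, sq_abs,
    Real.sq_sqrt (by positivity), ← add_sum_erase _ _ (mem_univ k), ← Real.sqrt_sq_eq_abs,
    ← Real.sqrt_div' _ hak.le, one_sub_div (by positivity), add_sub_cancel_left]
  exact Real.sqrt_le_sqrt (div_le_div_of_nonneg_left htail hak (le_add_of_nonneg_right htail))

theorem sinAngleB_sum_pow_smul_le_of_orthonormal (lam c : ι → ℝ) {k : ι} {μ : ℝ} (hμ : 0 ≤ μ)
    (hdom : ∀ i ≠ k, |lam i| ≤ μ) (hk : lam k ≠ 0)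
    (hc : 0 < cosAngleB B (∑ i, c i • v i) (v k)) (T : ℕ) :
    sinAngleB B (∑ i, (lam i ^ T * c i) • v i) (v k) ≤
      (μ / |lam k|) ^ T / cosAngleB B (∑ i, c i • v i) (v k) := by
  rw [cosAngleB_sum_smul_of_orthonormal horth] at hc ⊢
  have hck : c k ≠ 0 := by rintro h; simp [h] at hc
  have htail : √(∑ i ∈ univ.erase k, (lam i ^ T * c i) ^ 2) ≤ μ ^ T * √(∑ i, c i ^ 2) := by
    rw [← Real.sqrt_sq (by positivity : 0 ≤ μ ^ T), ← Real.sqrt_mul (sq_nonneg _), mul_sum]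
    refine Real.sqrt_le_sqrt ?_
    calc ∑ i ∈ univ.erase k, (lam i ^ T * c i) ^ 2
        ≤ ∑ i ∈ univ.erase k, (μ ^ T) ^ 2 * c i ^ 2 := sum_le_sum fun i hi => by
          rw [mul_pow, ← sq_abs (lam i ^ T), abs_pow]
          gcongr
          exact hdom i (ne_of_mem_erase hi)
      _ ≤ ∑ i, (μ ^ T) ^ 2 * c i ^ 2 :=
          sum_le_sum_of_subset_of_nonneg (erase_subset _ _) fun _ _ _ => by positivity
  calc _ ≤ √(∑ i ∈ univ.erase k, (lam i ^ T * c i) ^ 2) / |lam k ^ T * c k| :=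
        sinAngleB_sum_smul_le_of_orthonormal horth _ (mul_ne_zero (pow_ne_zero T hk) hck)
    _ ≤ μ ^ T * √(∑ i, c i ^ 2) / |lam k ^ T * c k| := by gcongr
    _ = _ := by
        have : √(∑ i, c i ^ 2) ≠ 0 := fun h => by simp [h] at hc
        rw [abs_mul, abs_pow, div_pow]; field_simp

end Angle

theorem power_method_linear_convergence_general (d : ℕ) (h2 : 2 ≤ d)
    (A B : Matrix (Fin d) (Fin d) ℝ) (hB : B.PosDef)
    (lam : Fin d → ℝ) (v : Fin d → (Fin d → ℝ))
    (heig : ∀ i, A.mulVec (v i) = lam i • B.mulVec (v i))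
    (horth : ∀ i j, v i ⬝ᵥ B.mulVec (v j) = if i = j then 1 else 0)
    (hbasis : Submodule.span ℝ (Set.range v) = ⊤)
    (hsort : ∀ i j : Fin d, i ≤ j → |lam j| ≤ |lam i|)
    (v₁ : Fin d → ℝ) (hv₁ : v₁ = v ⟨0, Nat.lt_of_lt_of_le Nat.zero_lt_two h2⟩)
    (hgap : |lam ⟨1, h2⟩| < |lam ⟨0, Nat.lt_of_lt_of_le Nat.zero_lt_two h2⟩|)
    (ρ : ℝ) (hρ : ρ = 1 - |lam ⟨1, h2⟩| / |lam ⟨0, Nat.lt_of_lt_of_le Nat.zero_lt_two h2⟩|)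
    (w : ℕ → (Fin d → ℝ))
    (hiter : ∀ t : ℕ, w (t + 1) = (B⁻¹ * A).mulVec (w t))
    (hinit : 0 < cosAngleB B (w 0) v₁) :
    ∀ ε : ℝ, 0 < ε → ε < 1 →
      ∀ T : ℕ, (2 / ρ) * Real.log (1 / (ε * cosAngleB B (w 0) v₁)) ≤ (T : ℝ) →
        sinAngleB B (w T) v₁ ≤ ε := by
  intro ε hε hε1 T hT
  obtain ⟨c, hc⟩ : ∃ c : Fin d → ℝ, ∑ i, c i • v i = w 0 :=
    (Submodule.mem_span_range_iff_exists_fun ℝ).mp (hbasis ▸ Submodule.mem_top)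
  have hwT : w T = ∑ i, (lam i ^ T * c i) • v i := iterate_eq_sum_pow_smul
    (fun i => inv_mul_mulVec_eq_smul hB.det_pos.ne'.isUnit (heig i)) hiter hc.symm T
  subst hv₁ hρ
  rw [← hc] at hinit hT
  rw [hwT]
  set k : Fin d := ⟨0, Nat.lt_of_lt_of_le Nat.zero_lt_two h2⟩
  set cos₀ := cosAngleB B (∑ i, c i • v i) (v k)
  set r := |lam ⟨1, h2⟩| / |lam k|
  have hdom : ∀ i ≠ k, |lam i| ≤ |lam ⟨1, h2⟩| :=
    fun i hi => hsort _ _ (Nat.one_le_iff_ne_zero.mpr fun h => hi (Fin.ext h))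
  have hk : lam k ≠ 0 := abs_pos.mp ((abs_nonneg _).trans_lt hgap)
  have hρ : 0 < 1 - r := sub_pos.mpr ((div_lt_one (abs_pos.mpr hk)).mpr hgap)
  have hx : ε * cos₀ ≤ 1 :=
    mul_le_one₀ hε1.le hinit.le (cosAngleB_sum_smul_le_one_of_orthonormal horth c k)
  have hlog : 0 ≤ Real.log (1 / (ε * cos₀)) :=
    Real.log_nonneg (one_le_one_div (by positivity) hx)
  have hrate : r ^ T ≤ ε * cos₀ := pow_le_of_log_inv_le_mul (by positivity) (by positivity) <|
    calc Real.log (1 / (ε * cos₀)) ≤ (1 - r) * (2 / (1 - r) * Real.log (1 / (ε * cos₀))) := by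
          field_simp; linarith
      _ ≤ (1 - r) * T := by gcongr
  calc sinAngleB B (∑ i, (lam i ^ T * c i) • v i) (v k) ≤ r ^ T / cos₀ :=
        sinAngleB_sum_pow_smul_le_of_orthonormal horth lam c (abs_nonneg _) hdom hk hinit T
    _ ≤ ε := (div_le_iff₀ hinit).mpr hrate

/-- Linear convergence of the (exact) power iteration `w_{t+1} = B⁻¹ A w_t`:
with `ρ = 1 - |λ₂|/|λ₁|`, after `T ≥ (2/ρ) log(1/(ε cos θ₀))` iterations we have
`sin θ_B(w_T, v₁) ≤ ε`. -/
theorem power_method_linear_convergence (d : ℕ) (h2 : 2 ≤ d)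
    (A B : Matrix (Fin d) (Fin d) ℝ) (hA : A.IsSymm) (hB : B.PosDef)
    (lam : Fin d → ℝ) (v : Fin d → (Fin d → ℝ))
    (heig : ∀ i, A.mulVec (v i) = lam i • B.mulVec (v i))
    (horth : ∀ i j, v i ⬝ᵥ B.mulVec (v j) = if i = j then 1 else 0)
    (hbasis : Submodule.span ℝ (Set.range v) = ⊤)
    (hsort : ∀ i j : Fin d, i ≤ j → |lam j| ≤ |lam i|)
    (v₁ : Fin d → ℝ) (hv₁ : v₁ = v ⟨0, Nat.lt_of_lt_of_le Nat.zero_lt_two h2⟩)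
    (hgap : |lam ⟨1, h2⟩| < |lam ⟨0, Nat.lt_of_lt_of_le Nat.zero_lt_two h2⟩|)
    (ρ : ℝ) (hρ : ρ = 1 - |lam ⟨1, h2⟩| / |lam ⟨0, Nat.lt_of_lt_of_le Nat.zero_lt_two h2⟩|)
    (w : ℕ → (Fin d → ℝ))
    (hiter : ∀ t : ℕ, w (t + 1) = (B⁻¹ * A).mulVec (w t))
    (hinit : 0 < cosAngleB B (w 0) v₁) :
    ∀ ε : ℝ, 0 < ε → ε < 1 →
      ∀ T : ℕ, (2 / ρ) * Real.log (1 / (ε * cosAngleB B (w 0) v₁)) ≤ (T : ℝ) →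
        sinAngleB B (w T) v₁ ≤ ε :=
  power_method_linear_convergence_general d h2 A B hB lam v heig horth hbasis hsort v₁ hv₁ hgap ρ hρ
    w hiter hinit
end

section
/- Let B be a d×d real symmetric positive definite matrix and m ∈ ℝ^d a nonzero vector, and set A = m mᵀ. Define x★ = B^{-1} m / √(mᵀ B^{-1} m). Then x★ᵀ B x★ = 1; for every x ∈ ℝ^d with xᵀ B x = 1 one has xᵀ A x ≤ mᵀ B^{-1} m, with equality attained at x★ (i.e. x★ᵀ A x★ = mᵀ B^{-1} m); and any x with xᵀ B x = 1 and xᵀ A x = mᵀ B^{-1} m satisfies x = x★ or x = −x★. Consequently, computing the top generalized eigenvector of (m mᵀ, B) yields the solution of the linear system B x = m up to nonzero scaling, so the top-1 generalized eigenvector problem is at least as hard as solving symmetric positive definite linear systems. -/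
/-!
For `y = B⁻¹ m` one has `xᵀ B y = mᵀ x`, so `xᵀ (m mᵀ) x = (xᵀ B y)²`. Cauchy–Schwarz for the
inner product `⟨u, v⟩ = uᵀ B v` bounds this by `(xᵀ B x)(yᵀ B y) = mᵀ B⁻¹ m` on the constraint
set, and equality forces `x` to be a multiple of `y`; the constraint `xᵀ B x = 1` then fixes the
multiple up to sign.
-/

open Matrix

namespace Matrix

variable {n : Type*} [Fintype n]

theorem dotProduct_vecMulVec_self_mulVec {α : Type*} [CommSemiring α] (m x : n → α) :
    x ⬝ᵥ vecMulVec m m *ᵥ x = (m ⬝ᵥ x) ^ 2 := by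
  rw [vecMulVec_mulVec, op_smul_eq_smul, dotProduct_smul, smul_eq_mul, dotProduct_comm, sq]

theorem IsSymm.dotProduct_mulVec_comm {α : Type*} [CommSemiring α] {B : Matrix n n α}
    (hB : B.IsSymm) (x y : n → α) :
    x ⬝ᵥ B *ᵥ y = y ⬝ᵥ B *ᵥ x := by
  rw [← dotProduct_transpose_mulVec, hB.eq]

variable [DecidableEq n] {B : Matrix n n ℝ}

theorem PosSemidef.sq_dotProduct_mulVec_le (hB : B.PosSemidef) (x y : n → ℝ) :
    (x ⬝ᵥ B *ᵥ y) ^ 2 ≤ (x ⬝ᵥ B *ᵥ x) * (y ⬝ᵥ B *ᵥ y) := by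
  have hsymm : B.toBilin'.IsSymm :=
    isSymm_toBilin'_iff_isSymm.mpr (isHermitian_iff_isSymm.mp hB.1)
  simpa only [toBilin'_apply'] using
    B.toBilin'.apply_sq_le_of_symm
      (fun x => by simpa [toBilin'_apply'] using hB.dotProduct_mulVec_nonneg x)
      (LinearMap.BilinForm.isSymm_iff.mp hsymm) x y

theorem PosDef.smul_eq_smul_of_sq_dotProduct_mulVec_eq (hB : B.PosDef) {x y : n → ℝ}
    (h : (x ⬝ᵥ B *ᵥ y) ^ 2 = (x ⬝ᵥ B *ᵥ x) * (y ⬝ᵥ B *ᵥ y)) :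
    (x ⬝ᵥ B *ᵥ y) • x = (x ⬝ᵥ B *ᵥ x) • y := by
  -- `z = (xᵀBy) x - (xᵀBx) y` has `zᵀBz = (xᵀBx) ((xᵀBx)(yᵀBy) - (xᵀBy)²)`, which `h` makes `0`.
  have hz := B.toBilin'.apply_smul_sub_smul_sub_eq x y
  simp only [toBilin'_apply'] at hz
  rw [(isHermitian_iff_isSymm.mp hB.1).dotProduct_mulVec_comm y x, ← sq, ← h, sub_self,
    mul_zero] at hz
  by_contra hne
  simpa [hz] using hB.dotProduct_mulVec_pos (sub_ne_zero.mpr hne)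

theorem mulVec_nonsing_inv_mulVec {α : Type*} [CommRing α] {A : Matrix n n α} (h : IsUnit A.det)
    (v : n → α) : A *ᵥ (A⁻¹ *ᵥ v) = v := by
  rw [mulVec_mulVec, mul_nonsing_inv A h, one_mulVec]

theorem PosDef.dotProduct_mulVec_inv_mulVec (hB : B.PosDef) (m x : n → ℝ) :
    x ⬝ᵥ B *ᵥ (B⁻¹ *ᵥ m) = m ⬝ᵥ x := by
  rw [mulVec_nonsing_inv_mulVec ((isUnit_iff_isUnit_det B).mp hB.isUnit), dotProduct_comm]

theorem PosDef.sq_dotProduct_le (hB : B.PosDef) (m x : n → ℝ) :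
    (m ⬝ᵥ x) ^ 2 ≤ (x ⬝ᵥ B *ᵥ x) * (m ⬝ᵥ B⁻¹ *ᵥ m) := by
  simpa only [hB.dotProduct_mulVec_inv_mulVec] using
    hB.posSemidef.sq_dotProduct_mulVec_le x (B⁻¹ *ᵥ m)

theorem PosDef.smul_eq_smul_inv_mulVec_of_sq_dotProduct_eq (hB : B.PosDef) {m x : n → ℝ}
    (h : (m ⬝ᵥ x) ^ 2 = (x ⬝ᵥ B *ᵥ x) * (m ⬝ᵥ B⁻¹ *ᵥ m)) :
    (m ⬝ᵥ x) • x = (x ⬝ᵥ B *ᵥ x) • (B⁻¹ *ᵥ m) := by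
  have hCS : (x ⬝ᵥ B *ᵥ (B⁻¹ *ᵥ m)) ^ 2 =
      (x ⬝ᵥ B *ᵥ x) * ((B⁻¹ *ᵥ m) ⬝ᵥ B *ᵥ (B⁻¹ *ᵥ m)) := by
    simpa only [hB.dotProduct_mulVec_inv_mulVec] using h
  simpa only [hB.dotProduct_mulVec_inv_mulVec] using
    hB.smul_eq_smul_of_sq_dotProduct_mulVec_eq hCS

theorem PosDef.dotProduct_inv_mulVec_pos (hB : B.PosDef) {m : n → ℝ} (hm : m ≠ 0) :
    0 < m ⬝ᵥ B⁻¹ *ᵥ m := by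
  simpa using hB.inv.dotProduct_mulVec_pos hm

end Matrix

/-- With `A = m mᵀ` and `x★ = B⁻¹ m / √(mᵀ B⁻¹ m)`, the vector `x★` is
`B`-normalized, maximizes `xᵀ A x` over `{x : xᵀ B x = 1}` with maximum value `mᵀ B⁻¹ m`,
and is the unique maximizer up to sign. Hence the top generalized eigenvector of
`(m mᵀ, B)` solves the linear system `B x = m` up to nonzero scaling. -/
theorem top_genEig_solves_linear_system (d : ℕ)
    (B : Matrix (Fin d) (Fin d) ℝ) (hB : B.PosDef)
    (m : Fin d → ℝ) (hm : m ≠ 0)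
    (A : Matrix (Fin d) (Fin d) ℝ) (hA : A = Matrix.vecMulVec m m)
    (xs : Fin d → ℝ)
    (hxs : xs = (Real.sqrt (m ⬝ᵥ B⁻¹.mulVec m))⁻¹ • B⁻¹.mulVec m) :
    xs ⬝ᵥ B.mulVec xs = 1 ∧
    (∀ x : Fin d → ℝ, x ⬝ᵥ B.mulVec x = 1 → x ⬝ᵥ A.mulVec x ≤ m ⬝ᵥ B⁻¹.mulVec m) ∧
    xs ⬝ᵥ A.mulVec xs = m ⬝ᵥ B⁻¹.mulVec m ∧
    (∀ x : Fin d → ℝ, x ⬝ᵥ B.mulVec x = 1 → x ⬝ᵥ A.mulVec x = m ⬝ᵥ B⁻¹.mulVec m →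
        x = xs ∨ x = -xs) := by
  set c := m ⬝ᵥ B⁻¹ *ᵥ m
  have hsqrt : √c ≠ 0 := (Real.sqrt_pos.mpr (hB.dotProduct_inv_mulVec_pos hm)).ne'
  have hsq : √c ^ 2 = c := Real.sq_sqrt (hB.dotProduct_inv_mulVec_pos hm).le
  have hxsB : xs ⬝ᵥ B *ᵥ xs = 1 := by
    rw [hxs, mulVec_smul, dotProduct_smul, smul_dotProduct, hB.dotProduct_mulVec_inv_mulVec,
      smul_eq_mul, smul_eq_mul]
    field_simp
    exact hsq.symm
  have hmxs : m ⬝ᵥ xs = √c := by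
    rw [hxs, dotProduct_smul, smul_eq_mul]
    field_simp
    exact hsq.symm
  subst hA
  simp only [dotProduct_vecMulVec_self_mulVec]
  refine ⟨hxsB, fun x hx => ?_, by rw [hmxs, hsq], fun x hx heq => ?_⟩
  · simpa only [hx, one_mul] using hB.sq_dotProduct_le m x
  · have hprop := hB.smul_eq_smul_inv_mulVec_of_sq_dotProduct_eq (m := m) (x := x)
      (by rw [hx, one_mul, heq])
    rw [hx, one_smul] at hprop
    rcases sq_eq_sq_iff_eq_or_eq_neg.mp (heq.trans hsq.symm) with hs | hs
    · left
      rw [hxs, ← hprop, smul_smul, hs, inv_mul_cancel₀ hsqrt, one_smul]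
    · right
      rw [hxs, ← hprop, smul_smul, hs, mul_neg, inv_mul_cancel₀ hsqrt, neg_smul, one_smul,
        neg_neg]
end

section
/- Let f : ℝ^d → ℝ be differentiable, α-strongly convex and β-smooth (its gradient is β-Lipschitz) with 0 < α ≤ β, let x★ be its minimizer, and set Q = β/α. Consider Nesterov's accelerated gradient descent started at x₀ with y₀ = x₀ and iterates y_{t+1} = x_t − (1/β) ∇f(x_t), x_{t+1} = y_{t+1} + ((√Q − 1)/(√Q + 1)) (y_{t+1} − y_t). Then for every t ≥ 0, f(y_t) − f(x★) ≤ 2 (f(x₀) − f(x★)) · exp(−t/√Q). -/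
/-!
Set `κ = √Q`, so that `β = α κ²`, and `z_t = (1 + κ) x_t - κ y_t`. The momentum rule is equivalent
to `z_{t+1} = (1 - 1/κ) z_t + x_t / κ - ∇f(x_t) / (α κ)`, and the potential
`Φ_t = f(y_t) - f(x★) + (α/2) ‖z_t - x★‖²` contracts by the factor `1 - 1/κ` at every step: this
combines the gradient-step decrease `f(y_{t+1}) ≤ f(x_t) - ‖∇f(x_t)‖² / (2β)` with the strong
convexity lower bounds at `x_t` towards `y_t` and towards `x★`. Since `Φ_0 ≤ 2 (f(x₀) - f(x★))` and
`(1 - 1/κ)^t ≤ exp(-t/κ)`, the bound follows from `f(y_t) - f(x★) ≤ Φ_t`.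
-/

open Set RealInnerProductSpace
open scoped NNReal

theorem ConvexOn.apply_add_fderiv_le {E : Type*} [NormedAddCommGroup E] [NormedSpace ℝ E]
    {s : Set E} {φ : E → ℝ} {φ' : E →L[ℝ] ℝ} {u v : E}
    (hφ : ConvexOn ℝ s φ) (hv : v ∈ s) (hu : u ∈ s) (hd : HasFDerivAt φ φ' v) :
    φ v + φ' (u - v) ≤ φ u := by
  let L : ℝ →ᵃ[ℝ] E := AffineMap.lineMap v u
  have hd' : HasDerivAt (φ ∘ L) (φ' (u - v)) 0 :=
    HasFDerivAt.comp_hasDerivAt (0 : ℝ) (by simpa [L] using hd) AffineMap.hasDerivAt_lineMap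
  have := (hφ.comp_affineMap L).le_slope_of_hasDerivAt (x := 0) (y := 1) (by simpa [L])
    (by simpa [L]) zero_lt_one hd'
  simpa [L, slope_def_field, map_sub, add_comm, ← le_sub_iff_add_le'] using this

theorem one_sub_pow_le_exp_neg_mul {s : ℝ} (hs : s ≤ 1) (n : ℕ) :
    (1 - s) ^ n ≤ Real.exp (-(n * s)) := by
  rw [neg_mul_eq_mul_neg, Real.exp_nat_mul]
  exact pow_le_pow_left₀ (sub_nonneg.2 hs) (Real.one_sub_le_exp_neg s) n

variable {E : Type*} [NormedAddCommGroup E]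

noncomputable def nesterovPotential (f : E → ℝ) (α : ℝ) (xstar y z : E) : ℝ :=
  f y - f xstar + α / 2 * ‖z - xstar‖ ^ 2

theorem sub_le_nesterovPotential {f : E → ℝ} {α : ℝ} (hα : 0 ≤ α) (xstar y z : E) :
    f y - f xstar ≤ nesterovPotential f α xstar y z :=
  le_add_of_nonneg_right (by positivity)

theorem nesterovPotential_nonneg {f : E → ℝ} {α : ℝ} {xstar : E} (hα : 0 ≤ α)
    (hmin : ∀ w, f xstar ≤ f w) (y z : E) : 0 ≤ nesterovPotential f α xstar y z :=
  (sub_nonneg.2 (hmin y)).trans (sub_le_nesterovPotential hα xstar y z)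

variable [InnerProductSpace ℝ E]

theorem norm_smul_add_smul_sq {a b : ℝ} (hab : a + b = 1) (x y : E) :
    ‖a • x + b • y‖ ^ 2 = a * ‖x‖ ^ 2 + b * ‖y‖ ^ 2 - a * b * ‖x - y‖ ^ 2 := by
  rw [norm_add_sq_real, norm_sub_sq_real, norm_smul, norm_smul, real_inner_smul_left,
    real_inner_smul_right, mul_pow, mul_pow, Real.norm_eq_abs, Real.norm_eq_abs, sq_abs, sq_abs]
  obtain rfl := eq_sub_of_add_eq hab
  ring

variable [CompleteSpace E]

theorem IsLocalMin.hasGradientAt_eq_zero {f : E → ℝ} {a g' : E} (h : IsLocalMin f a)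
    (hg : HasGradientAt f g' a) : g' = 0 := by
  simpa using h.hasFDerivAt_eq_zero hg.hasFDerivAt

theorem StrongConvexOn.apply_add_inner_add_sq_le {s : Set E} {f : E → ℝ} {m : ℝ} {u v g' : E}
    (hf : StrongConvexOn s m f) (hv : v ∈ s) (hu : u ∈ s) (hg : HasGradientAt f g' v) :
    f v + ⟪g', u - v⟫ + m / 2 * ‖u - v‖ ^ 2 ≤ f u := by
  have hd := hg.hasFDerivAt.sub ((hasStrictFDerivAt_norm_sq v).hasFDerivAt.const_mul (m / 2))
  have := (strongConvexOn_iff_convex.1 hf).apply_add_fderiv_le hv hu hd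
  simp only [sub_apply, InnerProductSpace.toDual_apply_apply, smul_apply, innerSL_apply_apply,
    smul_eq_mul, nsmul_eq_mul, Nat.cast_ofNat, inner_sub_right, real_inner_self_eq_norm_sq] at this
  rw [norm_sub_sq_real, inner_sub_right, real_inner_comm v u]
  linarith

theorem apply_le_add_inner_add_sq_of_lipschitzWith {f : E → ℝ} {g : E → E} {K : ℝ≥0}
    (hf : ∀ x, HasGradientAt f (g x) x) (hg : LipschitzWith K g) (u v : E) :
    f u ≤ f v + ⟪g v, u - v⟫ + K / 2 * ‖u - v‖ ^ 2 := by
  let L : ℝ →ᵃ[ℝ] E := AffineMap.lineMap v u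
  have hL : ∀ t, L t - v = t • (u - v) := fun t => AffineMap.lineMap_vsub_left v u t
  have hderiv : ∀ t, HasDerivAt (fun t => f (L t) - f v - t * ⟪g v, u - v⟫)
      ⟪g (L t) - g v, u - v⟫ t := by
    intro t
    have hfL := (hf (L t)).hasFDerivAt.comp_hasDerivAt t AffineMap.hasDerivAt_lineMap
    simp only [InnerProductSpace.toDual_apply_apply] at hfL
    exact ((hfL.sub_const (f v)).sub ((hasDerivAt_id t).mul_const _)).congr_deriv
      (by rw [inner_sub_left, one_mul])
  have hquad : ∀ t, HasDerivAt (fun t => K / 2 * t ^ 2 * ‖u - v‖ ^ 2) (K * t * ‖u - v‖ ^ 2) t := by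
    intro t
    exact (((hasDerivAt_pow 2 t).const_mul ((K : ℝ) / 2)).mul_const (‖u - v‖ ^ 2)).congr_deriv
      (by push_cast; ring)
  have hslope : ∀ t ∈ Ico (0 : ℝ) 1, ⟪g (L t) - g v, u - v⟫ ≤ K * t * ‖u - v‖ ^ 2 := by
    intro t ht
    calc ⟪g (L t) - g v, u - v⟫ ≤ ‖g (L t) - g v‖ * ‖u - v‖ := real_inner_le_norm _ _
      _ ≤ K * ‖L t - v‖ * ‖u - v‖ := by gcongr; exact hg.norm_sub_le _ _
      _ = K * t * ‖u - v‖ ^ 2 := by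
        rw [hL, norm_smul, Real.norm_of_nonneg ht.1]; ring
  have := image_le_of_deriv_right_le_deriv_boundary
    (fun t _ => (hderiv t).continuousAt.continuousWithinAt)
    (fun t _ => (hderiv t).hasDerivWithinAt) (by simp [L])
    (fun t _ => (hquad t).continuousAt.continuousWithinAt)
    (fun t _ => (hquad t).hasDerivWithinAt) hslope (right_mem_Icc.2 zero_le_one)
  simp only [L, AffineMap.lineMap_apply_one] at this
  linarith

theorem apply_sub_inv_smul_le_of_lipschitzWith {f : E → ℝ} {g : E → E} {K : ℝ≥0}
    (hf : ∀ x, HasGradientAt f (g x) x) (hg : LipschitzWith K g) (x : E) :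
    f (x - (K : ℝ)⁻¹ • g x) ≤ f x - (2 * (K : ℝ))⁻¹ * ‖g x‖ ^ 2 := by
  have h := apply_le_add_inner_add_sq_of_lipschitzWith hf hg (x - (K : ℝ)⁻¹ • g x) x
  rw [sub_sub_cancel_left, inner_neg_right, real_inner_smul_right, norm_neg, norm_smul,
    real_inner_self_eq_norm_sq, Real.norm_of_nonneg (by positivity)] at h
  convert h using 1
  rcases eq_or_ne (K : ℝ) 0 with hK | hK
  · simp [hK]
  · field_simp
    ring

theorem nesterovPotential_self_le {f : E → ℝ} {α : ℝ} {xstar g' : E}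
    (hconv : StrongConvexOn univ α f) (hmin : IsLocalMin f xstar) (hg : HasGradientAt f g' xstar)
    (x : E) : nesterovPotential f α xstar x x ≤ 2 * (f x - f xstar) := by
  have := hconv.apply_add_inner_add_sq_le (mem_univ xstar) (mem_univ x) hg
  rw [hmin.hasGradientAt_eq_zero hg, inner_zero_left] at this
  unfold nesterovPotential
  linarith

theorem nesterovPotential_step {f : E → ℝ} {g : E → E} {α κ : ℝ} {K : ℝ≥0}
    (hf : ∀ x, HasGradientAt f (g x) x) (hconv : StrongConvexOn univ α f)
    (hg : LipschitzWith K g) (hα : 0 < α) (hκ : 1 ≤ κ) (hK : (K : ℝ) = α * κ ^ 2)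
    (xstar x y : E) :
    nesterovPotential f α xstar (x - (K : ℝ)⁻¹ • g x) (κ • (x - (K : ℝ)⁻¹ • g x) - (κ - 1) • y)
      ≤ (1 - κ⁻¹) * nesterovPotential f α xstar y ((1 + κ) • x - κ • y) := by
  unfold nesterovPotential
  have hκ0 : κ ≠ 0 := by positivity
  set s := κ⁻¹ with hs
  have hs0 : 0 ≤ s := by positivity
  have hs1 : 0 ≤ 1 - s := sub_nonneg.2 (inv_le_one_of_one_le₀ hκ)
  set c := s / α with hc
  have hαc : α * c = s := by rw [hc]; field_simp
  set a := (1 + κ) • x - κ • y - xstar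
  set b := x - xstar
  have hyx : y - x = s • (b - a) := by
    simp only [a, b, hs]; match_scalars <;> field_simp <;> ring
  have hz : κ • (x - (K : ℝ)⁻¹ • g x) - (κ - 1) • y - xstar = ((1 - s) • a + s • b) - c • g x := by
    simp only [a, b, hc, hs, hK]; match_scalars <;> field_simp <;> ring
  have hdesc : f (x - (K : ℝ)⁻¹ • g x) ≤ f x - α / 2 * c ^ 2 * ‖g x‖ ^ 2 := by
    convert apply_sub_inv_smul_le_of_lipschitzWith hf hg x using 3
    rw [hK, hc, hs]
    field_simp
  have hstar := hconv.apply_add_inner_add_sq_le (mem_univ x) (mem_univ xstar) (hf x)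
  have hy := hconv.apply_add_inner_add_sq_le (mem_univ x) (mem_univ y) (hf x)
  rw [show xstar - x = -b by simp [b], norm_neg, inner_neg_right] at hstar
  rw [hyx, norm_smul, Real.norm_of_nonneg hs0, real_inner_smul_right, inner_sub_right,
    norm_sub_rev, mul_pow] at hy
  rw [hz, norm_sub_sq_real, norm_smul_add_smul_sq (sub_add_cancel 1 s), norm_smul,
    Real.norm_of_nonneg (by positivity), real_inner_smul_right, inner_add_left,
    real_inner_smul_left, real_inner_smul_left, real_inner_comm (g x) a,
    real_inner_comm (g x) b, mul_pow]
  have hD : 0 ≤ α / 2 * ((1 - s) * s * (1 + s)) * ‖a - b‖ ^ 2 := by positivity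
  -- weights `1 - s` and `s` on the strong convexity bounds towards `y` and `xstar`
  linear_combination hdesc + mul_le_mul_of_nonneg_left hy hs1 + s * hstar + hD
    - ((1 - s) * ⟪g x, a⟫ + s * ⟪g x, b⟫) * hαc

/-- Nesterov's accelerated gradient descent on an `α`-strongly convex,
`β`-smooth differentiable `f` with minimizer `x★` and `Q = β/α` satisfies
`f(y_t) − f(x★) ≤ 2 (f(x₀) − f(x★)) exp(−t/√Q)`. -/
theorem nesterov_agd_convergence (d : ℕ)
    (f : EuclideanSpace ℝ (Fin d) → ℝ)
    (g : EuclideanSpace ℝ (Fin d) → EuclideanSpace ℝ (Fin d))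
    (α β : ℝ) (hα : 0 < α) (hαβ : α ≤ β)
    (hgrad : ∀ x, HasGradientAt f (g x) x)
    (hconv : StrongConvexOn Set.univ α f)
    (hsmooth : LipschitzWith (Real.toNNReal β) g)
    (xstar : EuclideanSpace ℝ (Fin d)) (hmin : ∀ w, f xstar ≤ f w)
    (Q : ℝ) (hQ : Q = β / α)
    (x y : ℕ → EuclideanSpace ℝ (Fin d))
    (hy0 : y 0 = x 0)
    (hy : ∀ t : ℕ, y (t + 1) = x t - (1 / β) • g (x t))
    (hx : ∀ t : ℕ, x (t + 1) =
      y (t + 1) + ((Real.sqrt Q - 1) / (Real.sqrt Q + 1)) • (y (t + 1) - y t)) :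
    ∀ t : ℕ, f (y t) - f xstar ≤
      2 * (f (x 0) - f xstar) * Real.exp (-(t : ℝ) / Real.sqrt Q) := by
  set κ := Real.sqrt Q
  have hQ1 : 1 ≤ Q := by rw [hQ, le_div_iff₀ hα]; linarith
  have hκ : 1 ≤ κ := Real.one_le_sqrt.2 hQ1
  have hβ : (Real.toNNReal β : ℝ) = α * κ ^ 2 := by
    rw [Real.coe_toNNReal _ (by linarith), Real.sq_sqrt (by linarith), hQ]
    field_simp
  let Φ : ℕ → ℝ := fun t => nesterovPotential f α xstar (y t) ((1 + κ) • x t - κ • y t)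
  have hstep : ∀ t, Φ (t + 1) ≤ (1 - κ⁻¹) * Φ t := by
    intro t
    have hz : (1 + κ) • x (t + 1) - κ • y (t + 1) = κ • y (t + 1) - (κ - 1) • y t := by
      rw [hx t]
      match_scalars <;> field_simp <;> ring
    have hy' : y (t + 1) = x t - (Real.toNNReal β : ℝ)⁻¹ • g (x t) := by
      rw [hy t, one_div, Real.coe_toNNReal _ (by linarith)]
    simp only [Φ]
    rw [hz, hy']
    exact nesterovPotential_step hgrad hconv hsmooth hα hκ hβ xstar (x t) (y t)
  have hΦ0 : Φ 0 ≤ 2 * (f (x 0) - f xstar) := by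
    simpa only [Φ, hy0, add_smul, one_smul, add_sub_cancel_right] using
      nesterovPotential_self_le hconv (Filter.Eventually.of_forall hmin) (hgrad xstar) (x 0)
  intro t
  calc f (y t) - f xstar ≤ Φ t := sub_le_nesterovPotential hα.le _ _ _
    _ ≤ (1 - κ⁻¹) ^ t * Φ 0 :=
      le_geom (sub_nonneg.2 (inv_le_one_of_one_le₀ hκ)) t fun k _ => hstep k
    _ ≤ Real.exp (-(t * κ⁻¹)) * (2 * (f (x 0) - f xstar)) :=
      mul_le_mul (one_sub_pow_le_exp_neg_mul (inv_le_one_of_one_le₀ hκ) t) hΦ0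
        (nesterovPotential_nonneg hα.le hmin _ _) (Real.exp_pos _).le
    _ = 2 * (f (x 0) - f xstar) * Real.exp (-(t : ℝ) / κ) := by
      rw [mul_comm, div_eq_mul_inv, neg_mul]
end
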